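/- The second moment of the Hadamard walk limit density equals (2-√2)/2: ∫_{-1/√2}^{1/√2} x² / (π (1 - x²) √(1 - 2x²)) dx = (2 - √2)/2. -/

import Mathlib

/-!
The integrand has the explicit primitive
`F x = (arcsin (x / √(1 - x²)) - arcsin (√2 x) / √2) / π`,
which stays continuous up to the endpoints `±1/√2`, where both arcsines equal `±π/2`.
Since the integrand is nonnegative, it is automatically integrable, and the fundamental theorem
of calculus gives `F (1/√2) - F (-1/√2) = 2 F (1/√2) = 1 - 1/√2`.
-/

open Real Set intervalIntegral

theorem HasDerivAt.arcsin {f : ℝ → ℝ} {f' x : ℝ} (hf : HasDerivAt f f' x) (hx : f x ^ 2 < 1) :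
    HasDerivAt (fun y => arcsin (f y)) (f' / √(1 - f x ^ 2)) x := by
  obtain ⟨hlo, hhi⟩ := abs_lt.mp ((sq_lt_one_iff_abs_lt_one _).mp hx)
  rw [div_eq_mul_one_div, mul_comm]
  exact (hasDerivAt_arcsin hlo.ne' hhi.ne).comp x hf

theorem hasDerivAt_arcsin_div_sqrt_one_sub_sq {x : ℝ} (hx : 2 * x ^ 2 < 1) :
    HasDerivAt (fun y => arcsin (y / √(1 - y ^ 2))) (1 / ((1 - x ^ 2) * √(1 - 2 * x ^ 2))) x := by
  have hpos : 0 < 1 - x ^ 2 := by nlinarith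
  have hs0 : 0 < √(1 - x ^ 2) := sqrt_pos.mpr hpos
  have hss : √(1 - x ^ 2) ^ 2 = 1 - x ^ 2 := sq_sqrt hpos.le
  have ht0 : 0 < √(1 - 2 * x ^ 2) := sqrt_pos.mpr (by linarith)
  have hquot : (x / √(1 - x ^ 2)) ^ 2 < 1 := by
    rw [div_pow, hss, div_lt_one hpos]
    linarith
  have hsqrt : √(1 - (x / √(1 - x ^ 2)) ^ 2) = √(1 - 2 * x ^ 2) / √(1 - x ^ 2) := by
    rw [← sqrt_div' _ hpos.le, div_pow, hss]
    congr 1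
    field_simp
    ring
  have hsq : HasDerivAt (fun y => √(1 - y ^ 2)) (-(2 * x) / (2 * √(1 - x ^ 2))) x := by
    simpa using ((hasDerivAt_pow 2 x).const_sub 1).sqrt hpos.ne'
  convert ((hasDerivAt_id' x).fun_div hsq hs0.ne').arcsin hquot using 1
  rw [hsqrt]
  generalize √(1 - 2 * x ^ 2) = t at ht0 ⊢
  field_simp
  linear_combination x ^ 2 * hss

noncomputable def secondMomentAntideriv (x : ℝ) : ℝ :=
  (arcsin (x / √(1 - x ^ 2)) - arcsin (√2 * x) / √2) / π

theorem hasDerivAt_secondMomentAntideriv {x : ℝ} (hx : 2 * x ^ 2 < 1) :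
    HasDerivAt secondMomentAntideriv (x ^ 2 / (π * (1 - x ^ 2) * √(1 - 2 * x ^ 2))) x := by
  have hsq : (√2 * x) ^ 2 = 2 * x ^ 2 := by rw [mul_pow, sq_sqrt zero_le_two]
  have hasin := ((hasDerivAt_id' x).const_mul √2).arcsin (hsq ▸ hx)
  rw [hsq, mul_one] at hasin
  refine (((hasDerivAt_arcsin_div_sqrt_one_sub_sq hx).fun_sub
    (hasin.div_const √2)).div_const π).congr_deriv ?_
  have : 0 < 1 - x ^ 2 := by linarith [sq_nonneg x]
  have : 0 < √(1 - 2 * x ^ 2) := sqrt_pos.mpr (by linarith)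
  field_simp
  ring

theorem secondMomentAntideriv_neg (x : ℝ) :
    secondMomentAntideriv (-x) = -secondMomentAntideriv x := by
  simp only [secondMomentAntideriv, neg_sq, neg_div, mul_neg, arcsin_neg]
  ring

theorem secondMomentAntideriv_one_div_sqrt_two :
    secondMomentAntideriv (1 / √2) = (2 - √2) / 4 := by
  have h2 : (0 : ℝ) < √2 := by positivity
  have hhalf : √(1 - (1 / √2) ^ 2) = 1 / √2 := by
    rw [div_pow, sq_sqrt zero_le_two, sqrt_eq_iff_mul_self_eq_of_pos (by positivity)]
    field_simp
    norm_num [mul_self_sqrt zero_le_two]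
  rw [secondMomentAntideriv, hhalf, div_self (by positivity), mul_one_div_cancel h2.ne',
    arcsin_one]
  field_simp
  linear_combination 2 * sq_sqrt zero_le_two

theorem two_mul_sq_le_one_of_mem_Icc {x : ℝ} (hx : x ∈ Icc (-(1 / √2)) (1 / √2)) :
    2 * x ^ 2 ≤ 1 := by
  have := sq_le_sq' hx.1 hx.2
  rw [div_pow, sq_sqrt zero_le_two] at this
  linarith

theorem two_mul_sq_lt_one_of_mem_Ioo {x : ℝ} (hx : x ∈ Ioo (-(1 / √2)) (1 / √2)) :
    2 * x ^ 2 < 1 := by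
  have := sq_lt_sq' hx.1 hx.2
  rw [div_pow, sq_sqrt zero_le_two] at this
  linarith

theorem continuousOn_secondMomentAntideriv :
    ContinuousOn secondMomentAntideriv (Icc (-(1 / √2)) (1 / √2)) := by
  refine continuousOn_of_forall_continuousAt fun x hx => ?_
  have : √(1 - x ^ 2) ≠ 0 :=
    (sqrt_pos.mpr (by linarith [two_mul_sq_le_one_of_mem_Icc hx, sq_nonneg x])).ne'
  unfold secondMomentAntideriv
  fun_prop (disch := assumption)

theorem hadamard_second_moment :
    ∫ x in (-(1 / Real.sqrt 2) : ℝ)..(1 / Real.sqrt 2),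
      x ^ 2 / (π * (1 - x ^ 2) * Real.sqrt (1 - 2 * x ^ 2)) = (2 - Real.sqrt 2) / 2 := by
  have hab : -(1 / √2) ≤ 1 / √2 := by linarith [show 0 < 1 / √2 by positivity]
  have hderiv : ∀ x ∈ Ioo (-(1 / √2)) (1 / √2), HasDerivAt secondMomentAntideriv
      (x ^ 2 / (π * (1 - x ^ 2) * √(1 - 2 * x ^ 2))) x := fun x hx =>
    hasDerivAt_secondMomentAntideriv (two_mul_sq_lt_one_of_mem_Ioo hx)
  have hnonneg : ∀ x ∈ Ioo (-(1 / √2)) (1 / √2),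
      0 ≤ x ^ 2 / (π * (1 - x ^ 2) * √(1 - 2 * x ^ 2)) := fun x hx => by
    have : 0 ≤ 1 - x ^ 2 := by linarith [two_mul_sq_lt_one_of_mem_Ioo hx, sq_nonneg x]
    positivity
  have hint := intervalIntegrable_deriv_of_nonneg
    (uIcc_of_le hab ▸ continuousOn_secondMomentAntideriv)
    (by simpa [hab] using hderiv) (by simpa [hab] using hnonneg)
  rw [integral_eq_sub_of_hasDerivAt_of_le hab continuousOn_secondMomentAntideriv hderiv hint,
    secondMomentAntideriv_neg, secondMomentAntideriv_one_div_sqrt_two]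
  ring
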